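/- Let f be the triangle wave with period T = √2 and let its Fourier coefficients on [0, T] be α₀ = (1/T)∫₀ᵀ f(t) dt, α_k = (2/T)∫₀ᵀ f(t)·cos(2πkt/T) dt, and β_k = (2/T)∫₀ᵀ f(t)·sin(2πkt/T) dt for k ≥ 1. Then α₀ = 0, α_k = 0 for all k ≥ 1, β_k = 0 whenever k is even, and β_{2m+1} = −(2√2/π²)·(−1)^m/(2m+1)² for every m ∈ ℕ. -/

import Mathlib

/-!
On one period the triangle wave is piecewise affine with slopes `-1, 1, -1` on `[0, T/4]`,
`[T/4, 3T/4]`, `[3T/4, T]`, and it vanishes at `0` and `T`. Integrating by parts twice on each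
piece, the boundary terms `f · G` telescope away and only the jumps of the slope survive, so
for any `g` with `G' = g` and `H' = G`,
`∫₀ᵀ f g = H T - H 0 + 2 (H (T/4) - H (3T/4))`.
For `g = cos (ω t)` and `g = sin (ω t)` with `ω = 2πk/T` this gives `0` and
`-4 sin (πk/2) / ω²`, respectively.
-/

open MeasureTheory Real

/-- The triangle wave obtained by rotating the rounding function by 45°:
`f(t) = (1/(2√2))·(1 − 4·|frac((t − √2/4)/√2) − 1/2|)`, periodic with period `√2`. -/
noncomputable def triangleWave (t : ℝ) : ℝ :=
  (1 / (2 * Real.sqrt 2)) *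
    (1 - 4 * |Int.fract ((t - Real.sqrt 2 / 4) / Real.sqrt 2) - 1 / 2|)

/-- Zeroth Fourier coefficient of `f` on `[0, T]`. -/
noncomputable def fourierA0 (T : ℝ) (f : ℝ → ℝ) : ℝ := (1 / T) * ∫ u in (0:ℝ)..T, f u

/-- Cosine Fourier coefficients of `f` on `[0, T]`. -/
noncomputable def fourierA (T : ℝ) (f : ℝ → ℝ) (k : ℕ) : ℝ :=
  (2 / T) * ∫ u in (0:ℝ)..T, f u * Real.cos (2 * Real.pi * k * u / T)

/-- Sine Fourier coefficients of `f` on `[0, T]`. -/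
noncomputable def fourierB (T : ℝ) (f : ℝ → ℝ) (k : ℕ) : ℝ :=
  (2 / T) * ∫ u in (0:ℝ)..T, f u * Real.sin (2 * Real.pi * k * u / T)

open Set intervalIntegral

/-- The triangle wave of period `T` with slopes `±1` that vanishes and decreases at `0`. -/
noncomputable def periodicTriangle (T t : ℝ) : ℝ :=
  T / 4 * (1 - 4 * |Int.fract ((t - T / 4) / T) - 1 / 2|)

theorem triangleWave_eq_periodicTriangle : triangleWave = periodicTriangle (√2) := by
  ext t
  have h : 1 / (2 * √2) = √2 / 4 := by
    field_simp
    rw [sq_sqrt zero_le_two]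
    norm_num
  rw [triangleWave, periodicTriangle, h]

section PeriodicTriangle

variable {T : ℝ}

theorem continuous_periodicTriangle (T : ℝ) : Continuous (periodicTriangle T) := by
  have h : Continuous fun t => |Int.fract ((t - T / 4) / T) - 1 / 2| :=
    (ContinuousOn.comp_fract'' (f := fun x : ℝ => |x - 1 / 2|) (by fun_prop) (by norm_num)).comp
      (by fun_prop)
  unfold periodicTriangle
  fun_prop

theorem periodicTriangle_periodic (hT : T ≠ 0) : Function.Periodic (periodicTriangle T) T := by
  intro t
  have h : (t + T - T / 4) / T = (t - T / 4) / T + 1 := by field_simp; ring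
  rw [periodicTriangle, periodicTriangle, h, Int.fract_add_one]

theorem periodicTriangle_eq_of_mem_Icc (hT : 0 < T) {t : ℝ} (ht : t ∈ Icc (T / 4) (5 * T / 4)) :
    periodicTriangle T t = T / 4 - |t - 3 * T / 4| := by
  set s := (t - T / 4) / T with hs
  have hs₀ : 0 ≤ s := by rw [hs, le_div_iff₀ hT]; linarith [ht.1]
  have hs₁ : s ≤ 1 := by rw [hs, div_le_iff₀ hT]; linarith [ht.2]
  have hfract : |Int.fract s - 1 / 2| = |s - 1 / 2| := by
    rcases hs₁.lt_or_eq with hlt | heq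
    · rw [Int.fract_eq_self.2 ⟨hs₀, hlt⟩]
    · rw [heq]
      norm_num
  have hshift : t - 3 * T / 4 = T * (s - 1 / 2) := by rw [hs]; field_simp; ring
  rw [periodicTriangle, ← hs, hfract, hshift, abs_mul, abs_of_pos hT]
  ring

theorem eqOn_periodicTriangle_Icc_zero (hT : 0 < T) :
    EqOn (periodicTriangle T) (fun t => -t) (Icc 0 (T / 4)) := fun t ht => by
  rw [← periodicTriangle_periodic hT.ne' t,
    periodicTriangle_eq_of_mem_Icc hT ⟨by linarith [ht.1], by linarith [ht.2]⟩,
    abs_of_nonneg (by linarith [ht.1])]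
  ring

theorem eqOn_periodicTriangle_Icc_quarter (hT : 0 < T) :
    EqOn (periodicTriangle T) (fun t => t - T / 2) (Icc (T / 4) (3 * T / 4)) := fun t ht => by
  rw [periodicTriangle_eq_of_mem_Icc hT ⟨ht.1, by linarith [ht.2]⟩,
    abs_of_nonpos (by linarith [ht.2])]
  ring

theorem eqOn_periodicTriangle_Icc_three_quarters (hT : 0 < T) :
    EqOn (periodicTriangle T) (fun t => T - t) (Icc (3 * T / 4) T) := fun t ht => by
  rw [periodicTriangle_eq_of_mem_Icc hT ⟨by linarith [ht.1], by linarith [ht.2]⟩,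
    abs_of_nonneg (by linarith [ht.1])]
  ring

end PeriodicTriangle

theorem integral_mul_eq_of_eqOn_affine {f ℓ g G H : ℝ → ℝ} {q a b : ℝ}
    (hf : EqOn f ℓ (uIcc a b)) (hℓ : ∀ t, HasDerivAt ℓ q t) (hg : Continuous g)
    (hG : ∀ t, HasDerivAt G (g t) t) (hH : ∀ t, HasDerivAt H (G t) t) :
    ∫ t in a..b, f t * g t = (f b * G b - q * H b) - (f a * G a - q * H a) := by
  have hℓc : Continuous ℓ := continuous_iff_continuousAt.2 fun t => (hℓ t).continuousAt
  have hℓg : IntervalIntegrable (fun t => ℓ t * g t) volume a b :=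
    (hℓc.mul hg).intervalIntegrable a b
  rw [integral_congr fun t ht => congrArg (· * g t) (hf ht), hf left_mem_uIcc, hf right_mem_uIcc]
  refine integral_eq_sub_of_hasDerivAt (f := fun t => ℓ t * G t - q * H t) (fun t _ => ?_) hℓg
  exact (((hℓ t).mul (hG t)).sub ((hH t).const_mul q)).congr_deriv (by ring)

theorem integral_periodicTriangle_mul {T : ℝ} (hT : 0 < T) {g G H : ℝ → ℝ} (hg : Continuous g)
    (hG : ∀ t, HasDerivAt G (g t) t) (hH : ∀ t, HasDerivAt H (G t) t) :
    ∫ t in 0..T, periodicTriangle T t * g t = H T - H 0 + 2 * (H (T / 4) - H (3 * T / 4)) := by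
  have hfg : Continuous fun t => periodicTriangle T t * g t :=
    (continuous_periodicTriangle T).mul hg
  have h₁ : (0 : ℝ) ≤ T / 4 := by linarith
  have h₂ : T / 4 ≤ 3 * T / 4 := by linarith
  have h₃ : 3 * T / 4 ≤ T := by linarith
  have hf₀ : periodicTriangle T 0 = 0 := by
    simpa using eqOn_periodicTriangle_Icc_zero hT (left_mem_Icc.2 h₁)
  have hfT : periodicTriangle T T = 0 := by
    simpa using eqOn_periodicTriangle_Icc_three_quarters hT (right_mem_Icc.2 h₃)
  rw [← integral_add_adjacent_intervals (hfg.intervalIntegrable 0 (3 * T / 4))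
      (hfg.intervalIntegrable _ T),
    ← integral_add_adjacent_intervals (hfg.intervalIntegrable 0 (T / 4))
      (hfg.intervalIntegrable _ (3 * T / 4)),
    integral_mul_eq_of_eqOn_affine (uIcc_of_le h₁ ▸ eqOn_periodicTriangle_Icc_zero hT)
      (fun t => (hasDerivAt_id' t).neg) hg hG hH,
    integral_mul_eq_of_eqOn_affine (uIcc_of_le h₂ ▸ eqOn_periodicTriangle_Icc_quarter hT)
      (fun t => (hasDerivAt_id' t).sub_const _) hg hG hH,
    integral_mul_eq_of_eqOn_affine (uIcc_of_le h₃ ▸ eqOn_periodicTriangle_Icc_three_quarters hT)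
      (fun t => (hasDerivAt_id' t).const_sub _) hg hG hH, hf₀, hfT]
  ring

theorem hasDerivAt_sin_mul_div {ω : ℝ} (hω : ω ≠ 0) (t : ℝ) :
    HasDerivAt (fun t => sin (ω * t) / ω) (cos (ω * t)) t := by
  refine (((hasDerivAt_id' t).const_mul ω).sin.div_const ω).congr_deriv ?_
  field_simp

theorem hasDerivAt_neg_cos_mul_div {ω : ℝ} (hω : ω ≠ 0) (t : ℝ) :
    HasDerivAt (fun t => -cos (ω * t) / ω) (sin (ω * t)) t := by
  refine (((hasDerivAt_id' t).const_mul ω).cos.neg.div_const ω).congr_deriv ?_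
  field_simp

section FourierCoefficients

variable {T : ℝ}

theorem fourierA0_periodicTriangle (hT : 0 < T) : fourierA0 T (periodicTriangle T) = 0 := by
  have h := integral_periodicTriangle_mul hT (g := fun _ => 1) (H := fun t => t ^ 2 / 2)
    continuous_const (fun t => hasDerivAt_id t)
    (fun t => by simpa using (hasDerivAt_pow 2 t).div_const 2)
  simp only [mul_one] at h
  rw [fourierA0, h]
  ring

theorem fourierA_periodicTriangle (hT : 0 < T) {k : ℕ} (hk : k ≠ 0) :
    fourierA T (periodicTriangle T) k = 0 := by
  set ω := 2 * π * k / T with hω_def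
  have hω : ω ≠ 0 := by positivity
  have h := integral_periodicTriangle_mul hT (g := fun t => cos (ω * t)) (by fun_prop)
    (hasDerivAt_sin_mul_div hω) (fun t => (hasDerivAt_neg_cos_mul_div hω t).div_const ω)
  have hωT : ω * T = k * (2 * π) := by rw [hω_def]; field_simp
  have hω3 : ω * (3 * T / 4) = k * (2 * π) - ω * (T / 4) := by rw [hω_def]; field_simp; ring
  simp only [fourierA, show ∀ u, 2 * π * k * u / T = ω * u from fun u => by ring, h]
  rw [hωT, hω3, cos_nat_mul_two_pi, cos_nat_mul_two_pi_sub]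
  simp

theorem fourierB_periodicTriangle (hT : 0 < T) {k : ℕ} (hk : k ≠ 0) :
    fourierB T (periodicTriangle T) k = -2 * T * sin (π * k / 2) / (π ^ 2 * k ^ 2) := by
  set ω := 2 * π * k / T with hω_def
  have hω : ω ≠ 0 := by positivity
  have h := integral_periodicTriangle_mul hT (g := fun t => sin (ω * t))
    (H := fun t => -(sin (ω * t) / ω) / ω) (by fun_prop)
    (hasDerivAt_neg_cos_mul_div hω) (fun t => (hasDerivAt_sin_mul_div hω t).neg.div_const ω)
  have hωT : ω * T = (2 * k : ℕ) * π := by rw [hω_def]; push_cast; field_simp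
  have hω4 : ω * (T / 4) = π * k / 2 := by rw [hω_def]; field_simp; ring
  have hω3 : ω * (3 * T / 4) = k * (2 * π) - π * k / 2 := by rw [hω_def]; field_simp; ring
  simp only [fourierB, show ∀ u, 2 * π * k * u / T = ω * u from fun u => by ring, h]
  rw [hωT, hω4, hω3, sin_nat_mul_pi, sin_nat_mul_two_pi_sub, mul_zero, sin_zero, hω_def]
  field_simp
  ring

end FourierCoefficients

theorem triangleWave_fourier_coeffs :
    fourierA0 (Real.sqrt 2) triangleWave = 0 ∧
    (∀ k : ℕ, 1 ≤ k → fourierA (Real.sqrt 2) triangleWave k = 0) ∧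
    (∀ k : ℕ, 1 ≤ k → Even k → fourierB (Real.sqrt 2) triangleWave k = 0) ∧
    (∀ m : ℕ, fourierB (Real.sqrt 2) triangleWave (2 * m + 1) =
      -(2 * Real.sqrt 2 / Real.pi ^ 2) * ((-1 : ℝ) ^ m / (2 * (m : ℝ) + 1) ^ 2)) := by
  have hT : (0 : ℝ) < √2 := by positivity
  rw [triangleWave_eq_periodicTriangle]
  refine ⟨fourierA0_periodicTriangle hT, fun k hk => fourierA_periodicTriangle hT (by omega),
    fun k hk ⟨n, hn⟩ => ?_, fun m => ?_⟩
  · have hangle : π * k / 2 = n * π := by rw [hn]; push_cast; ring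
    rw [fourierB_periodicTriangle hT (by omega), hangle, sin_nat_mul_pi]
    simp
  · have hangle : π * ((2 * m + 1 : ℕ) : ℝ) / 2 = π / 2 + m * π := by push_cast; ring
    rw [fourierB_periodicTriangle hT (by omega), hangle, sin_add_nat_mul_pi, sin_pi_div_two]
    push_cast
    field_simp
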